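/- arXiv:1303.5558 — 5 statements merged into one kernel-verified Lean document; each statement's English description precedes it below -/
import Mathlib

section
/- Let (t_j) be a sequence of positive real numbers that monotonically increases to infinity. Then there exists a sequence (t'_j) of positive reals monotonically increasing to infinity such that t'_j ≤ t_j for all j, and for all positive integers p, q, the products T'_p = ∏_{j=1}^p t'_j satisfy T'_{p+q} ≤ 2^{p+q} · T'_p · T'_q. -/
/-!
Put `t'ₙ = n · sₙ` with `sₙ = min_{i ≤ n} tᵢ / i`. Since `tᵢ / i ≥ tᵢ / n` and `tᵢ ≥ t_N` for
`N ≤ i ≤ n`, the minimum defining `t'ₙ` is at least `min (n · s_N) t_N`, which gives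
`t' → ∞`; moreover `t'ₙ ≤ tₙ` and `t'` increases. The point is that `t'ₙ / n` decreases, so
`t'_{p+j} ≤ ((p + j) / j) · t'_j`, and multiplying over `1 ≤ j ≤ q` gives
`T'_{p+q} ≤ C(p+q, q) · T'_p · T'_q ≤ 2^{p+q} · T'_p · T'_q`.
-/

open Filter Finset

theorem prod_Icc_add_le_choose_mul_prod {f : ℕ → ℝ} (hf₀ : ∀ n, 0 ≤ f n)
    (hf : AntitoneOn (fun n : ℕ => f n / n) (Set.Ici 1)) (p q : ℕ) :
    ∏ j ∈ Icc 1 (p + q), f j ≤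
      (p + q).choose q * (∏ j ∈ Icc 1 p, f j) * ∏ j ∈ Icc 1 q, f j := by
  induction q with
  | zero => simp
  | succ q ih =>
    have hslope : f (p + q + 1) / (p + q + 1) ≤ f (q + 1) / (q + 1) := by
      exact_mod_cast hf (by simp) (by simp) (by omega : q + 1 ≤ p + q + 1)
    have hchoose : ((p + q + 1 : ℕ) : ℝ) * (p + q).choose q =
        (p + q + 1).choose (q + 1) * (q + 1) := by
      exact_mod_cast Nat.add_one_mul_choose_eq (p + q) q
    have hstep : ((p + q).choose q : ℝ) * f (p + q + 1) ≤ (p + q + 1).choose (q + 1) * f (q + 1) :=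
      calc ((p + q).choose q : ℝ) * f (p + q + 1)
          = (p + q).choose q * (p + q + 1) * (f (p + q + 1) / (p + q + 1)) := by
            field_simp
        _ ≤ (p + q).choose q * (p + q + 1) * (f (q + 1) / (q + 1)) := by gcongr
        _ = (p + q + 1).choose (q + 1) * f (q + 1) := by
            push_cast at hchoose
            field_simp
            linear_combination f (q + 1) * hchoose
    have hA : 0 ≤ ∏ j ∈ Icc 1 p, f j := prod_nonneg fun j _ => hf₀ j
    have hB : 0 ≤ ∏ j ∈ Icc 1 q, f j := prod_nonneg fun j _ => hf₀ j
    rw [← add_assoc, prod_Icc_succ_top (by omega), prod_Icc_succ_top (by omega)]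
    calc (∏ j ∈ Icc 1 (p + q), f j) * f (p + q + 1)
        ≤ (p + q).choose q * (∏ j ∈ Icc 1 p, f j) * (∏ j ∈ Icc 1 q, f j) * f (p + q + 1) := by
          gcongr
          exact hf₀ _
      _ = ((p + q).choose q * f (p + q + 1)) * (∏ j ∈ Icc 1 p, f j) * ∏ j ∈ Icc 1 q, f j := by
          ring
      _ ≤ ((p + q + 1).choose (q + 1) * f (q + 1)) * (∏ j ∈ Icc 1 p, f j) *
            ∏ j ∈ Icc 1 q, f j := by gcongr
      _ = _ := by ring

theorem prod_Icc_add_le_two_pow_mul_prod {f : ℕ → ℝ} (hf₀ : ∀ n, 0 ≤ f n)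
    (hf : AntitoneOn (fun n : ℕ => f n / n) (Set.Ici 1)) (p q : ℕ) :
    ∏ j ∈ Icc 1 (p + q), f j ≤ 2 ^ (p + q) * (∏ j ∈ Icc 1 p, f j) * ∏ j ∈ Icc 1 q, f j := by
  refine (prod_Icc_add_le_choose_mul_prod hf₀ hf p q).trans ?_
  have hchoose : ((p + q).choose q : ℝ) ≤ 2 ^ (p + q) := by
    exact_mod_cast Nat.choose_le_two_pow (p + q) q
  have hA : 0 ≤ ∏ j ∈ Icc 1 p, f j := prod_nonneg fun j _ => hf₀ j
  have hB : 0 ≤ ∏ j ∈ Icc 1 q, f j := prod_nonneg fun j _ => hf₀ j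
  gcongr

/-- `minSlope t n = min (t 0, t 1 / 1, …, t n / n)`. -/
noncomputable def minSlope (t : ℕ → ℝ) : ℕ → ℝ
  | 0 => t 0
  | n + 1 => min (minSlope t n) (t (n + 1) / (n + 1))

/-- The factor `max n 1` differs from `n` only at `n = 0`, where it keeps the term positive. -/
noncomputable def slopeMinorant (t : ℕ → ℝ) (n : ℕ) : ℝ :=
  max (n : ℝ) 1 * minSlope t n

namespace minSlope

variable {t : ℕ → ℝ}

theorem pos (hpos : ∀ n, 0 < t n) (n : ℕ) : 0 < minSlope t n := by
  induction n with
  | zero => exact hpos 0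
  | succ n ih => exact lt_min ih (by have := hpos (n + 1); positivity)

theorem antitone : Antitone (minSlope t) :=
  antitone_nat_of_succ_le fun _ => min_le_left _ _

theorem le_div (n : ℕ) : minSlope t n ≤ t n / max (n : ℝ) 1 := by
  cases n with
  | zero => simp [minSlope]
  | succ n =>
    rw [max_eq_left (by simp), minSlope]
    exact_mod_cast min_le_right _ _

theorem min_div_le (hpos : ∀ n, 0 < t n) (hmono : Monotone t) {N n : ℕ} (hN : 1 ≤ N)
    (hn : N ≤ n) : min (minSlope t N) (t N / n) ≤ minSlope t n := by
  induction n, hn using Nat.le_induction with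
  | base => exact min_le_left _ _
  | succ n hNn ih =>
    have hn : (0 : ℝ) < n := by exact_mod_cast (hN.trans hNn)
    have htN : 0 ≤ t N := (hpos N).le
    refine le_min ?_ ?_
    · refine le_trans (min_le_min le_rfl ?_) ih
      gcongr
      linarith
    · push_cast
      exact min_le_of_right_le (by gcongr; exact hmono (by omega))

end minSlope

namespace slopeMinorant

variable {t : ℕ → ℝ}

theorem pos (hpos : ∀ n, 0 < t n) (n : ℕ) : 0 < slopeMinorant t n :=
  mul_pos (lt_max_of_lt_right one_pos) (minSlope.pos hpos n)

theorem le (n : ℕ) : slopeMinorant t n ≤ t n := by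
  have h := minSlope.le_div (t := t) n
  rwa [le_div_iff₀' (by positivity)] at h

theorem succ (n : ℕ) :
    slopeMinorant t (n + 1) = min ((n + 1) * minSlope t n) (t (n + 1)) := by
  have hn : (0 : ℝ) < n + 1 := by positivity
  rw [slopeMinorant, minSlope, Nat.cast_succ, max_eq_left (by linarith),
    mul_min_of_nonneg _ _ hn.le, mul_div_cancel₀ _ hn.ne']

theorem monotone (hpos : ∀ n, 0 < t n) (hmono : Monotone t) : Monotone (slopeMinorant t) := by
  refine monotone_nat_of_le_succ fun n => ?_
  rw [succ]
  refine le_min ?_ ((le n).trans (hmono n.le_succ))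
  have : max (n : ℝ) 1 ≤ n + 1 := max_le (by linarith) (by linarith [n.cast_nonneg (α := ℝ)])
  exact mul_le_mul_of_nonneg_right this (minSlope.pos hpos n).le

theorem antitoneOn_div : AntitoneOn (fun n : ℕ => slopeMinorant t n / n) (Set.Ici 1) := by
  have h : Set.EqOn (fun n : ℕ => slopeMinorant t n / n) (minSlope t) (Set.Ici 1) := by
    intro n (hn : 1 ≤ n)
    have hn' : (1 : ℝ) ≤ n := by exact_mod_cast hn
    simp only [slopeMinorant, max_eq_left hn']
    field_simp
  exact minSlope.antitone.antitoneOn _ |>.congr h.symm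

theorem tendsto_atTop (hpos : ∀ n, 0 < t n) (hmono : Monotone t)
    (htend : Tendsto t atTop atTop) : Tendsto (slopeMinorant t) atTop atTop := by
  refine tendsto_atTop_atTop_of_monotone (monotone hpos hmono) fun b => ?_
  obtain ⟨N, hN⟩ := (htend.eventually_ge_atTop b).exists_forall_of_atTop
  obtain ⟨K, hK⟩ := exists_nat_ge (b / minSlope t (max N 1))
  set N' := max N 1
  have hs := minSlope.pos hpos N'
  refine ⟨max N' K, ?_⟩
  set n := max N' K
  have hn : (N' : ℝ) ≤ n := by exact_mod_cast le_max_left N' K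
  have hn1 : (1 : ℝ) ≤ n := le_trans (by exact_mod_cast le_max_right N 1) hn
  have hlow := minSlope.min_div_le hpos hmono (le_max_right N 1) (le_max_left N' K)
  calc b ≤ min (n * minSlope t N') (t N') := by
        refine le_min ?_ (hN N' (le_max_left N 1))
        rw [div_le_iff₀ hs] at hK
        exact hK.trans (by gcongr; exact_mod_cast le_max_right N' K)
    _ = n * min (minSlope t N') (t N' / n) := by
        rw [mul_min_of_nonneg _ _ (by linarith), mul_div_cancel₀ _ (by linarith)]
    _ ≤ slopeMinorant t n := by
        rw [slopeMinorant, max_eq_left hn1]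
        exact mul_le_mul_of_nonneg_left hlow (by linarith)

end slopeMinorant

/-- Lemma 1 (Lemma `3` of the paper): every sequence in 𝔑 (positive, monotonically
increasing to infinity) admits a smaller sequence in 𝔑 whose partial products
`T'_p = ∏_{j=1}^p t'_j` satisfy `T'_{p+q} ≤ 2^{p+q} T'_p T'_q`. -/
theorem exists_subordinate_submultiplicative_seq
    (t : ℕ → ℝ) (hpos : ∀ j, 0 < t j) (hmono : Monotone t)
    (htend : Tendsto t atTop atTop) :
    ∃ t' : ℕ → ℝ, (∀ j, 0 < t' j) ∧ Monotone t' ∧ Tendsto t' atTop atTop ∧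
      (∀ j, t' j ≤ t j) ∧
      ∀ p q : ℕ, 0 < p → 0 < q →
        (∏ j ∈ Finset.Icc 1 (p + q), t' j) ≤
          2 ^ (p + q) * (∏ j ∈ Finset.Icc 1 p, t' j) * (∏ j ∈ Finset.Icc 1 q, t' j) :=
  ⟨slopeMinorant t, slopeMinorant.pos hpos, slopeMinorant.monotone hpos hmono,
    slopeMinorant.tendsto_atTop hpos hmono htend, slopeMinorant.le, fun p q _ _ =>
      prod_Icc_add_le_two_pow_mul_prod (fun n => (slopeMinorant.pos hpos n).le)
        slopeMinorant.antitoneOn_div p q⟩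
end

section
/- Let (t'_j) be a sequence of positive reals with t'_1 = t_1 and t'_j = min(t_j, (j/(j-1))·t'_{j-1}) for j ≥ 2, where (t_j) is a positive monotonically increasing sequence tending to infinity. Then (t'_j) is monotonically increasing and tends to infinity. -/
open Filter

/-- The recursively defined sequence `t'_1 = t_1`, `t'_j = min (t_j, (j/(j-1))·t'_{j-1})`
(for `j ≥ 2`), where `(t_j)` is positive, monotone increasing and tends to infinity,
is itself monotonically increasing (from index 1 on) and tends to infinity. -/
theorem recursive_min_seq_monotone_tendsto
    (t t' : ℕ → ℝ) (hpos : ∀ j, 0 < t j) (hmono : Monotone t)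
    (htend : Tendsto t atTop atTop)
    (h1 : t' 1 = t 1)
    (hrec : ∀ j : ℕ, 2 ≤ j → t' j = min (t j) ((j : ℝ) / ((j : ℝ) - 1) * t' (j - 1))) :
    (∀ j : ℕ, 1 ≤ j → t' j ≤ t' (j + 1)) ∧ Tendsto (fun j => t' j) atTop atTop := by
  -- rewrite the recursion at index j+1
  have hrec' : ∀ j : ℕ, 1 ≤ j →
      t' (j + 1) = min (t (j + 1)) (((j : ℝ) + 1) / (j : ℝ) * t' j) := by
    intro j hj
    have h := hrec (j + 1) (by omega)
    rw [show j + 1 - 1 = j from rfl] at h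
    push_cast at h
    convert h using 3
    ring
  -- positivity of t'
  have hpos' : ∀ j, 1 ≤ j → 0 < t' j := by
    intro j hj
    induction j, hj using Nat.le_induction with
    | base => rw [h1]; exact hpos 1
    | succ n hn ih =>
      rw [hrec' n hn]
      have hn0 : (0:ℝ) < n := by exact_mod_cast hn
      exact lt_min (hpos _) (mul_pos (by positivity) ih)
  -- t' ≤ t
  have hle : ∀ j, 1 ≤ j → t' j ≤ t j := by
    intro j hj
    induction j, hj using Nat.le_induction with
    | base => rw [h1]
    | succ n hn ih => rw [hrec' n hn]; exact min_le_left _ _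
  -- monotonicity
  have hmono' : ∀ j : ℕ, 1 ≤ j → t' j ≤ t' (j + 1) := by
    intro j hj
    rw [hrec' j hj]
    have hj0 : (0:ℝ) < j := by exact_mod_cast hj
    refine le_min (le_trans (hle j hj) (hmono (Nat.le_succ j))) ?_
    have h1' : (1:ℝ) ≤ ((j:ℝ) + 1) / j := by
      rw [le_div_iff₀ hj0]; linarith
    exact le_mul_of_one_le_left (hpos' j hj).le h1'
  refine ⟨hmono', ?_⟩
  -- lower bound: ∃ k ≤ j, (j/k)·t_k ≤ t'_j
  have hex : ∀ j : ℕ, 1 ≤ j → ∃ k : ℕ, 1 ≤ k ∧ k ≤ j ∧ (j:ℝ) / (k:ℝ) * t k ≤ t' j := by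
    intro j hj
    induction j, hj using Nat.le_induction with
    | base => exact ⟨1, le_refl _, le_refl _, by rw [h1]; simp⟩
    | succ n hn ih =>
      rw [hrec' n hn]
      obtain ⟨k, hk1, hkn, hk⟩ := ih
      have hn0 : (0:ℝ) < n := by exact_mod_cast hn
      have hk0 : (0:ℝ) < k := by exact_mod_cast hk1
      rcases le_total (t (n + 1)) (((n:ℝ) + 1) / n * t' n) with h | h
      · refine ⟨n + 1, by omega, le_refl _, ?_⟩
        rw [min_eq_left h]
        push_cast
        rw [div_self (by positivity)]
        simp
      · refine ⟨k, hk1, by omega, ?_⟩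
        rw [min_eq_right h]
        have hmul := mul_le_mul_of_nonneg_left hk
          (by positivity : (0:ℝ) ≤ ((n:ℝ) + 1) / n)
        calc (((n:ℕ) + 1 : ℕ):ℝ) / k * t k
            = ((n:ℝ) + 1) / n * ((n:ℝ) / k * t k) := by push_cast; field_simp
          _ ≤ ((n:ℝ) + 1) / n * t' n := hmul
  -- divergence
  rw [tendsto_atTop]
  intro M
  obtain ⟨N, hN⟩ := eventually_atTop.mp ((tendsto_atTop.mp htend) M)
  set C : ℕ := max N 1 with hC
  have hC1 : 1 ≤ C := le_max_right _ _
  have hCpos : (0:ℝ) < C := by exact_mod_cast hC1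
  have ht1 : 0 < t 1 := hpos 1
  have hev : ∀ᶠ j : ℕ in atTop, (C:ℝ) * M / t 1 ≤ (j:ℝ) :=
    tendsto_natCast_atTop_atTop.eventually_ge_atTop _
  filter_upwards [hev, eventually_ge_atTop C] with j hj1 hj2
  have hj1' : 1 ≤ j := le_trans hC1 hj2
  have hjpos : (0:ℝ) < j := by exact_mod_cast hj1'
  obtain ⟨k, hk1, hkj, hk⟩ := hex j hj1'
  have hk0 : (0:ℝ) < k := by exact_mod_cast hk1
  by_cases hkN : N ≤ k
  · have h1' : (1:ℝ) ≤ (j:ℝ) / k := by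
      rw [le_div_iff₀ hk0]; exact_mod_cast by simpa using hkj
    calc M ≤ t k := hN k hkN
      _ = 1 * t k := (one_mul _).symm
      _ ≤ (j:ℝ) / k * t k := mul_le_mul_of_nonneg_right h1' (hpos k).le
      _ ≤ t' j := hk
  · have hkC : (k:ℝ) ≤ C := by
      have : k ≤ C := le_trans (le_of_not_ge hkN) (le_max_left _ _)
      exact_mod_cast this
    have step1 : M ≤ (j:ℝ) / C * t 1 := by
      rw [div_le_iff₀ ht1] at hj1
      rw [div_mul_eq_mul_div, le_div_iff₀ hCpos]
      linarith
    have step2 : (j:ℝ) / C * t 1 ≤ (j:ℝ) / k * t k := by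
      have hdiv : (j:ℝ) / C ≤ (j:ℝ) / k :=
        div_le_div_of_nonneg_left hjpos.le hk0 hkC
      exact mul_le_mul hdiv (hmono hk1) ht1.le (by positivity)
    exact le_trans step1 (le_trans step2 hk)
end

section
/- For any sequence (t'_j) of positive reals satisfying t'_{p+j} ≤ ((p+j)/j)·t'_j for all positive integers p, j, the products T'_p = ∏_{j=1}^p t'_j satisfy T'_{p+q} ≤ (p+q)!/(p!·q!) · T'_p · T'_q ≤ 2^{p+q} · T'_p · T'_q for all positive integers p, q. -/
/-! Write `T'_{p+q} = T'_p · ∏_{j ≤ q} t'_{p+j}` and bound each `t'_{p+j}` by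
`((p+j)/j) · t'_j`; the factors `(p+j)/j` multiply to `C(p+q, q) ≤ 2^{p+q}`. -/

open Finset

theorem Finset.prod_Icc_one_add {M : Type*} [CommMonoid M] (f : ℕ → M) (m n : ℕ) :
    ∏ j ∈ Icc 1 (m + n), f j = (∏ j ∈ Icc 1 m, f j) * ∏ j ∈ Icc 1 n, f (m + j) := by
  induction n with
  | zero => simp
  | succ n ih =>
    rw [← Nat.add_assoc, prod_Icc_succ_top (by omega), ih,
      prod_Icc_succ_top (by omega), mul_assoc, Nat.add_assoc]

theorem Finset.prod_Icc_add_div_eq_choose {K : Type*} [Field K] [CharZero K] (p q : ℕ) :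
    ∏ j ∈ Icc 1 q, ((p + j : K) / j) = (p + q).choose q := by
  induction q with
  | zero => simp
  | succ q ih =>
    rw [prod_Icc_succ_top (by omega), ih, ← Nat.add_assoc]
    have hq : (q + 1 : K) ≠ 0 := Nat.cast_add_one_ne_zero q
    have hchoose_succ :
        ((p + q + 1 : ℕ) : K) * (p + q).choose q = (p + q + 1).choose (q + 1) * (q + 1) := by
      exact_mod_cast Nat.add_one_mul_choose_eq (p + q) q
    push_cast at hchoose_succ
    field_simp
    push_cast
    linear_combination hchoose_succ

theorem prod_Icc_add_le_choose_mul_prod_s2 {K : Type*} [Field K] [LinearOrder K]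
    [IsStrictOrderedRing K] (t : ℕ → K) (ht : ∀ j, 0 ≤ t j) {p q : ℕ}
    (h : ∀ j ∈ Icc 1 q, t (p + j) ≤ (p + j : K) / j * t j) :
    ∏ j ∈ Icc 1 (p + q), t j ≤
      (p + q).choose p * (∏ j ∈ Icc 1 p, t j) * ∏ j ∈ Icc 1 q, t j :=
  calc ∏ j ∈ Icc 1 (p + q), t j
      = (∏ j ∈ Icc 1 p, t j) * ∏ j ∈ Icc 1 q, t (p + j) := prod_Icc_one_add t p q
    _ ≤ (∏ j ∈ Icc 1 p, t j) * ∏ j ∈ Icc 1 q, (p + j : K) / j * t j := by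
      gcongr with j hj
      · exact prod_nonneg fun j _ => ht j
      · exact fun j _ => ht (p + j)
      · exact h j hj
    _ = (p + q).choose p * (∏ j ∈ Icc 1 p, t j) * ∏ j ∈ Icc 1 q, t j := by
      rw [prod_mul_distrib, prod_Icc_add_div_eq_choose, Nat.choose_symm_add]
      ring

/-- If a positive sequence `(t'_j)` satisfies `t'_{p+j} ≤ ((p+j)/j)·t'_j` for all
`p, j ≥ 1`, then its partial products `T'_p = ∏_{j=1}^p t'_j` satisfy
`T'_{p+q} ≤ (p+q)!/(p!·q!) · T'_p · T'_q ≤ 2^{p+q} · T'_p · T'_q`. -/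
theorem prod_le_binom_mul_prod
    (t' : ℕ → ℝ) (hpos : ∀ j, 0 < t' j)
    (h : ∀ p j : ℕ, 0 < p → 0 < j → t' (p + j) ≤ ((p + j : ℝ) / (j : ℝ)) * t' j) :
    ∀ p q : ℕ, 0 < p → 0 < q →
      (∏ j ∈ Finset.Icc 1 (p + q), t' j) ≤
          ((p + q).factorial : ℝ) / ((p.factorial : ℝ) * (q.factorial : ℝ)) *
            (∏ j ∈ Finset.Icc 1 p, t' j) * (∏ j ∈ Finset.Icc 1 q, t' j) ∧
        ((p + q).factorial : ℝ) / ((p.factorial : ℝ) * (q.factorial : ℝ)) *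
            (∏ j ∈ Finset.Icc 1 p, t' j) * (∏ j ∈ Finset.Icc 1 q, t' j) ≤
          2 ^ (p + q) * (∏ j ∈ Finset.Icc 1 p, t' j) * (∏ j ∈ Finset.Icc 1 q, t' j) := by
  intro p q hp _
  have ht : ∀ j, 0 ≤ t' j := fun j => (hpos j).le
  have hT : ∀ n, 0 ≤ ∏ j ∈ Icc 1 n, t' j := fun n => prod_nonneg fun j _ => ht j
  rw [← Nat.cast_add_choose]
  refine ⟨prod_Icc_add_le_choose_mul_prod_s2 t' ht fun j hj => h p j hp (mem_Icc.1 hj).1, ?_⟩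
  have hchoose : ((p + q).choose p : ℝ) ≤ 2 ^ (p + q) := by
    exact_mod_cast Nat.choose_le_two_pow (p + q) p
  exact mul_le_mul_of_nonneg_right (mul_le_mul_of_nonneg_right hchoose (hT p)) (hT q)
end

section
/- Let E be a complete Hausdorff locally convex space and φ : ℝ^d → E be a map such that (i) φ is smooth, (ii) for every continuous seminorm q on E and every sequence (t_j) increasing to infinity, sup_α sup_x q(D^α φ(x)/(T_α M_α)) < ∞, and (iii) for every ε > 0, (t_j), and continuous seminorm q, there is a compact K with q(D^α φ(x)/(T_α M_α)) ≤ ε for all α and x ∉ K. Then the set A = { D^α φ(x)/(T_α M_α) : x ∈ ℝ^d, α ∈ ℕ^d } is precompact in E. -/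
open Filter

noncomputable def prodSeq (t : ℕ → ℝ) (k : ℕ) : ℝ := ∏ j ∈ Finset.Icc 1 k, t j

def msize {d : ℕ} (α : Fin d → ℕ) : ℕ := ∑ i, α i

def RClass (t : ℕ → ℝ) : Prop :=
  (∀ j, 0 < t j) ∧ Monotone t ∧ Tendsto t atTop atTop

open Topology

/-!
Fix a continuous seminorm `p` and a radius `r > 0`. Applying the boundedness hypothesis to the
sequence `t₀ / 2` instead of `t₀` divides `T_α` by `2 ^ |α|`, so `p` of an element of `A` is at most
`C / 2 ^ |α|`: all elements with `|α| ≥ N` lie in the `p`-ball of radius `r`. By the vanishing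
hypothesis so do all elements with `x` outside a compact `K`. What remains is the finite union over
`|α| < N` of the continuous images of `K`, a compact set. Hence every neighbourhood of `0` covers
`A` up to a compact set, which is enough for total boundedness.
-/

theorem totallyBounded_of_forall_nhds_zero_subset_union {E : Type*} [AddGroup E]
    [UniformSpace E] [IsUniformAddGroup E] {A : Set E}
    (h : ∀ U ∈ 𝓝 (0 : E), ∃ B, TotallyBounded B ∧ A ⊆ B ∪ U) : TotallyBounded A := by
  rw [totallyBounded_iff_subset_finite_iUnion_nhds_zero]
  intro U hU
  obtain ⟨B, hB, hAB⟩ := h U hU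
  obtain ⟨s, hs, hBs⟩ := totallyBounded_iff_subset_finite_iUnion_nhds_zero.mp hB U hU
  refine ⟨insert 0 s, hs.insert 0, hAB.trans (Set.union_subset ?_ ?_)⟩
  · exact hBs.trans (Set.biUnion_subset_biUnion_left (Set.subset_insert 0 s))
  · exact fun e he => Set.mem_biUnion (Set.mem_insert 0 s) ⟨e, he, zero_vadd _ _⟩

theorem WithSeminorms.exists_continuous_ball_subset {𝕜 E ι : Type*} [NormedField 𝕜]
    [AddCommGroup E] [Module 𝕜 E] [TopologicalSpace E] {q : SeminormFamily 𝕜 E ι}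
    (hq : WithSeminorms q) {U : Set E} (hU : U ∈ 𝓝 0) :
    ∃ p : Seminorm 𝕜 E, Continuous p ∧ ∃ r > 0, p.ball 0 r ⊆ U := by
  have := hq.topologicalAddGroup
  obtain ⟨s, r, hr, hsU⟩ := (hq.mem_nhds_iff 0 U).mp hU
  exact ⟨s.sup q, Seminorm.continuous_finsetSup fun i _ => hq.continuous_seminorm i, r, hr, hsU⟩

theorem exists_isCompact_forall_mem_union {κ X E : Type*} [TopologicalSpace X]
    [TopologicalSpace E] {f : κ → X → E} (hf : ∀ i, Continuous (f i)) {S : Set κ}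
    (hS : S.Finite) {K : Set X} (hK : IsCompact K) {U : Set E}
    (hSU : ∀ i ∉ S, ∀ x, f i x ∈ U) (hKU : ∀ i, ∀ x ∉ K, f i x ∈ U) :
    ∃ B, IsCompact B ∧ ∀ i x, f i x ∈ B ∪ U := by
  refine ⟨⋃ i ∈ S, f i '' K, hS.isCompact_biUnion fun i _ => hK.image (hf i), fun i x => ?_⟩
  by_cases hi : i ∈ S
  · by_cases hx : x ∈ K
    · exact Or.inl (Set.mem_biUnion hi ⟨x, hx, rfl⟩)
    · exact Or.inr (hKU i x hx)
  · exact Or.inr (hSU i hi x)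

theorem finite_setOf_msize_lt (d N : ℕ) : {α : Fin d → ℕ | msize α < N}.Finite :=
  (Set.Finite.pi fun _ => Set.finite_Iio N).subset fun α hα i _ =>
    (Finset.single_le_sum (fun j _ => Nat.zero_le (α j)) (Finset.mem_univ i)).trans_lt hα

theorem RClass.div_const {t : ℕ → ℝ} (ht : RClass t) {c : ℝ} (hc : 0 < c) :
    RClass fun j => t j / c :=
  ⟨fun j => div_pos (ht.1 j) hc, ht.2.1.div_const hc.le, ht.2.2.atTop_div_const hc⟩

theorem prodSeq_div_const (t : ℕ → ℝ) (c : ℝ) (k : ℕ) :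
    prodSeq (fun j => t j / c) k = prodSeq t k / c ^ k := by
  simp [prodSeq, Finset.prod_div_distrib]

theorem Seminorm.inv_prodSeq_smul_le {E : Type*} [AddCommGroup E] [Module ℝ E]
    (p : Seminorm ℝ E) {t : ℕ → ℝ} {c m C : ℝ} (hc : 0 < c) (k : ℕ) {v : E}
    (h : p ((prodSeq (fun j => t j / c) k * m)⁻¹ • v) ≤ C) :
    p ((prodSeq t k * m)⁻¹ • v) ≤ C / c ^ k := by
  have hck : (0 : ℝ) < c ^ k := pow_pos hc k
  have hv : (prodSeq t k * m)⁻¹ • v = (c ^ k)⁻¹ • (prodSeq (fun j => t j / c) k * m)⁻¹ • v := by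
    rw [smul_smul, prodSeq_div_const, div_mul_eq_mul_div, inv_div, ← mul_div_assoc,
      inv_mul_cancel₀ hck.ne', one_div]
  rw [hv, map_smul_eq_mul, Real.norm_eq_abs, abs_of_pos (inv_pos.2 hck), div_eq_inv_mul]
  exact mul_le_mul_of_nonneg_left h (inv_nonneg.2 hck.le)

theorem derivative_set_totallyBounded_general
    {d : ℕ} {E : Type*} [AddCommGroup E] [Module ℝ E] [UniformSpace E]
    [IsUniformAddGroup E] [ContinuousSMul ℝ E]
    {ι : Type*} (q : ι → Seminorm ℝ E) (hq : WithSeminorms q)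
    (M : ℕ → ℝ)
    (t₀ : ℕ → ℝ) (ht₀ : RClass t₀)
    (Φ : (Fin d → ℕ) → EuclideanSpace ℝ (Fin d) → E)
    (hΦcont : ∀ α, Continuous (Φ α))
    (hbdd : ∀ p : Seminorm ℝ E, Continuous ⇑p → ∀ t : ℕ → ℝ, RClass t →
      ∃ C : ℝ, ∀ (α : Fin d → ℕ) x,
        p ((prodSeq t (msize α) * M (msize α))⁻¹ • Φ α x) ≤ C)
    (hvanish : ∀ p : Seminorm ℝ E, Continuous ⇑p → ∀ t : ℕ → ℝ, RClass t →
      ∀ ε > (0 : ℝ), ∃ K : Set (EuclideanSpace ℝ (Fin d)), IsCompact K ∧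
        ∀ α : Fin d → ℕ, ∀ x ∉ K,
          p ((prodSeq t (msize α) * M (msize α))⁻¹ • Φ α x) ≤ ε) :
    TotallyBounded {e : E | ∃ (α : Fin d → ℕ) (x : EuclideanSpace ℝ (Fin d)),
      e = (prodSeq t₀ (msize α) * M (msize α))⁻¹ • Φ α x} := by
  refine totallyBounded_of_forall_nhds_zero_subset_union fun U hU => ?_
  obtain ⟨p, hp, r, hr, hpU⟩ := hq.exists_continuous_ball_subset hU
  obtain ⟨C, hC⟩ := hbdd p hp _ (ht₀.div_const two_pos)
  obtain ⟨N, hN⟩ := pow_unbounded_of_one_lt (C / r) one_lt_two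
  obtain ⟨K, hK, hKr⟩ := hvanish p hp t₀ ht₀ (r / 2) (half_pos hr)
  have hlarge : ∀ α ∉ {α : Fin d → ℕ | msize α < N}, ∀ x,
      (prodSeq t₀ (msize α) * M (msize α))⁻¹ • Φ α x ∈ U := by
    intro α hα x
    have hNα : (2 : ℝ) ^ N ≤ 2 ^ msize α := pow_le_pow_right₀ one_le_two (not_lt.1 hα)
    refine hpU (p.mem_ball_zero.2 ?_)
    calc _ ≤ C / 2 ^ msize α := p.inv_prodSeq_smul_le two_pos _ (hC α x)
      _ < r := by
        rw [div_lt_iff₀ (by positivity)]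
        nlinarith [(div_lt_iff₀ hr).1 hN]
  obtain ⟨B, hB, hAB⟩ := exists_isCompact_forall_mem_union (fun α => (hΦcont α).const_smul _)
    (finite_setOf_msize_lt d N) hK hlarge
    fun α x hx => hpU (p.mem_ball_zero.2 ((hKr α x hx).trans_lt (half_lt_self hr)))
  exact ⟨B, hB.totallyBounded, by rintro _ ⟨α, x, rfl⟩; exact hAB α x⟩

/-- Let `E` be a complete Hausdorff locally convex space (topology generated by a family
of seminorms) and let `Φ α x` represent the derivatives `D^α φ(x)` of a smooth `E`-valued
function `φ` satisfying the `Ḃ^{M_p}(ℝ^d; E)` bounds: uniform seminorm-boundedness of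
`D^α φ(x)/(T_α M_α)` and uniform seminorm-vanishing at infinity, for every continuous
seminorm and every `(t_j) ∈ 𝔑`. Then the set
`A = {D^α φ(x)/(T_α M_α) : x ∈ ℝ^d, α ∈ ℕ^d}` (for a fixed `(t_j) ∈ 𝔑`) is precompact
(totally bounded) in `E`. -/
theorem derivative_set_totallyBounded
    {d : ℕ} {E : Type*} [AddCommGroup E] [Module ℝ E] [UniformSpace E]
    [IsUniformAddGroup E] [ContinuousSMul ℝ E] [CompleteSpace E] [T2Space E]
    [LocallyConvexSpace ℝ E]
    {ι : Type*} [Nonempty ι] (q : ι → Seminorm ℝ E) (hq : WithSeminorms q)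
    (M : ℕ → ℝ) (hM : ∀ p, 0 < M p)
    (t₀ : ℕ → ℝ) (ht₀ : RClass t₀)
    (φ : EuclideanSpace ℝ (Fin d) → E)
    (Φ : (Fin d → ℕ) → EuclideanSpace ℝ (Fin d) → E)
    (hΦ0 : Φ 0 = φ) (hΦcont : ∀ α, Continuous (Φ α))
    (hbdd : ∀ p : Seminorm ℝ E, Continuous ⇑p → ∀ t : ℕ → ℝ, RClass t →
      ∃ C : ℝ, ∀ (α : Fin d → ℕ) x,
        p ((prodSeq t (msize α) * M (msize α))⁻¹ • Φ α x) ≤ C)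
    (hvanish : ∀ p : Seminorm ℝ E, Continuous ⇑p → ∀ t : ℕ → ℝ, RClass t →
      ∀ ε > (0 : ℝ), ∃ K : Set (EuclideanSpace ℝ (Fin d)), IsCompact K ∧
        ∀ α : Fin d → ℕ, ∀ x ∉ K,
          p ((prodSeq t (msize α) * M (msize α))⁻¹ • Φ α x) ≤ ε) :
    TotallyBounded {e : E | ∃ (α : Fin d → ℕ) (x : EuclideanSpace ℝ (Fin d)),
      e = (prodSeq t₀ (msize α) * M (msize α))⁻¹ • Φ α x} :=
  derivative_set_totallyBounded_general q hq M t₀ ht₀ Φ hΦcont hbdd hvanish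
end

section
/- Suppose the sequence (c_α)_{α∈ℕ^d} of complex numbers satisfies sup_α |c_α| M_α / L^{|α|} < ∞ for every L > 0, i.e., for every L > 0 there exists C > 0 with |c_α| M_α ≤ C L^{|α|} for all α. Then there exist a positive sequence (r_j) monotonically increasing to infinity and C₁ > 0 such that |c_α| R_α M_α ≤ C₁ for all α, where R_α = ∏_{j=1}^{|α|} r_j. -/
open Filter

/-- Komatsu's Lemma 3.4: if `sup_α |c_α| M_α / L^{|α|} < ∞` for every `L > 0`, then there
exist a positive sequence `(r_j)` monotonically increasing to infinity and `C₁ > 0` such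
that `|c_α| · R_α · M_α ≤ C₁` for all multi-indices `α`, where `R_α = ∏_{j=1}^{|α|} r_j`. -/
theorem exists_seq_of_rapid_decay
    {d : ℕ} (M : ℕ → ℝ) (hM : ∀ p, 0 < M p) (c : (Fin d → ℕ) → ℂ)
    (hc : ∀ L > (0 : ℝ), ∃ C > (0 : ℝ), ∀ α : Fin d → ℕ,
      ‖c α‖ * M (∑ i, α i) ≤ C * L ^ (∑ i, α i)) :
    ∃ r : ℕ → ℝ, (∀ j, 0 < r j) ∧ Monotone r ∧ Tendsto r atTop atTop ∧
      ∃ C₁ > (0 : ℝ), ∀ α : Fin d → ℕ,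
        ‖c α‖ * (∏ j ∈ Finset.Icc 1 (∑ i, α i), r j) * M (∑ i, α i) ≤ C₁ := by
  choose C hCpos hC using fun k : ℕ => hc ((1:ℝ)/4^k) (by positivity)
  choose n hn using fun k : ℕ => exists_nat_gt (C k)
  set N : ℕ → ℕ := fun k => Nat.rec 0 (fun k Nk => max (Nk + 1) (n (k+1))) k with hNdef
  have hN0 : N 0 = 0 := rfl
  have hNsucc : ∀ k, N (k+1) = max (N k + 1) (n (k+1)) := fun k => rfl
  have hNmono : StrictMono N := strictMono_nat_of_lt_succ (fun k => by
    rw [hNsucc]; exact lt_of_lt_of_le (Nat.lt_succ_self _) (le_max_left _ _))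
  have hNk : ∀ k, k ≤ N k := fun k => by
    induction k with
    | zero => simp [hN0]
    | succ k ih => rw [hNsucc]; omega
  have hCN : ∀ k, 1 ≤ k → C k ≤ 2 ^ (k * N k) := by
    intro k hk
    have h1 : n k ≤ N k := by
      cases k with
      | zero => omega
      | succ k' => rw [hNsucc]; exact le_max_right _ _
    have h2 : n k ≤ k * N k := le_trans h1 (Nat.le_mul_of_pos_left _ hk)
    have h3 : (n k : ℝ) < 2 ^ n k := by
      exact_mod_cast Nat.lt_two_pow_self (n := n k)
    calc C k ≤ (n k : ℝ) := (hn k).le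
      _ ≤ 2 ^ n k := h3.le
      _ ≤ 2 ^ (k * N k) := pow_le_pow_right₀ one_le_two h2
  set K : ℕ → ℕ := fun j => Nat.findGreatest (fun k => N k ≤ j) j with hKdef
  have hKmono : Monotone K := fun a b hab =>
    Nat.findGreatest_mono (fun k hk => le_trans hk hab) hab
  have hKN : ∀ k, k ≤ K (N k) := fun k => Nat.le_findGreatest (hNk k) le_rfl
  have hNKle : ∀ j, N (K j) ≤ j := by
    intro j
    have h0 : N 0 ≤ j := by rw [hN0]; exact Nat.zero_le j
    exact Nat.findGreatest_spec (P := fun k => N k ≤ j) (Nat.zero_le j) h0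
  refine ⟨fun j => (2:ℝ) ^ (K j), fun j => by positivity,
    fun a b hab => pow_le_pow_right₀ one_le_two (hKmono hab), ?_, ?_⟩
  · have hKt : Tendsto K atTop atTop := by
      refine tendsto_atTop_atTop.mpr fun b => ⟨N b, fun j hj => le_trans (hKN b) (hKmono hj)⟩
    refine tendsto_atTop_mono (fun j => ?_) (tendsto_natCast_atTop_atTop.comp hKt)
    show ((K j : ℝ)) ≤ 2 ^ (K j)
    calc ((K j : ℝ)) ≤ ((2 ^ K j : ℕ) : ℝ) := by exact_mod_cast (Nat.lt_two_pow_self (n := K j)).le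
      _ = 2 ^ (K j) := by push_cast; ring
  · refine ⟨C 0 + 1, by linarith [hCpos 0], fun α => ?_⟩
    set p := ∑ i, α i with hp
    set k := K p with hk
    have hprod : (∏ j ∈ Finset.Icc 1 p, (2:ℝ) ^ (K j)) ≤ 2 ^ (k * p) := by
      rw [Finset.prod_pow_eq_pow_sum]
      refine pow_le_pow_right₀ one_le_two ?_
      calc ∑ j ∈ Finset.Icc 1 p, K j ≤ ∑ _j ∈ Finset.Icc 1 p, k :=
            Finset.sum_le_sum fun j hj => hKmono (Finset.mem_Icc.mp hj).2
        _ = p * k := by rw [Finset.sum_const, Nat.card_Icc]; simp [Nat.mul_comm]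
        _ = k * p := Nat.mul_comm p k
    have hbase : ‖c α‖ * M p ≤ C k * ((1:ℝ)/4^k) ^ p := hC k α
    have hprodnn : (0:ℝ) ≤ ∏ j ∈ Finset.Icc 1 p, (2:ℝ) ^ (K j) :=
      Finset.prod_nonneg fun j _ => by positivity
    have step1 : ‖c α‖ * (∏ j ∈ Finset.Icc 1 p, (2:ℝ) ^ (K j)) * M p
        ≤ (C k * ((1:ℝ)/4^k) ^ p) * 2 ^ (k * p) := by
      have h1 : ‖c α‖ * (∏ j ∈ Finset.Icc 1 p, (2:ℝ) ^ (K j)) * M p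
          = (‖c α‖ * M p) * (∏ j ∈ Finset.Icc 1 p, (2:ℝ) ^ (K j)) := by ring
      rw [h1]
      have hnn : (0:ℝ) ≤ ‖c α‖ * M p := mul_nonneg (norm_nonneg _) (hM p).le
      exact mul_le_mul hbase hprod hprodnn (le_trans hnn hbase)
    have heq : (C k * ((1:ℝ)/4^k) ^ p) * 2 ^ (k * p) = C k / 2 ^ (k * p) := by
      have h4 : (4:ℝ) ^ (k * p) = 2 ^ (k * p) * 2 ^ (k * p) := by
        rw [show (4:ℝ) = 2 * 2 by norm_num, mul_pow]
      have h2 : (2:ℝ) ^ (k * p) ≠ 0 := by positivity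
      rw [div_pow, one_pow, ← pow_mul, h4]
      field_simp
    have hfin : C k / 2 ^ (k * p) ≤ C 0 + 1 := by
      rcases Nat.eq_zero_or_pos k with h0 | h1
      · rw [h0]; simp only [Nat.zero_mul, pow_zero, div_one]; linarith [hCpos 0]
      · have hCk : C k ≤ 2 ^ (k * p) := by
          refine le_trans (hCN k h1) (pow_le_pow_right₀ one_le_two ?_)
          exact Nat.mul_le_mul_left k (hNKle p)
        have : C k / 2 ^ (k * p) ≤ 1 := (div_le_one (by positivity)).mpr hCk
        linarith [hCpos 0]
    calc ‖c α‖ * (∏ j ∈ Finset.Icc 1 p, (2:ℝ) ^ (K j)) * M p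
        ≤ (C k * ((1:ℝ)/4^k) ^ p) * 2 ^ (k * p) := step1
      _ = C k / 2 ^ (k * p) := heq
      _ ≤ C 0 + 1 := hfin
end
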